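/- arXiv:1704.00990 — 2 statements merged into one kernel-verified Lean document; each statement's English description precedes it below -/
import Mathlib

section
/- Let G be an almost simple group with socle S, let K be a permutation group with G* ≤ K ≤ Sym(G), and let L be the intersection of all K-blocks of size at least 2 containing the identity of G. Then L is the underlying set of a normal subgroup of G containing S, and moreover the centralizer of S in this subgroup is trivial; in particular, this subgroup is an almost simple group whose socle equals S. -/
/-- The subgroup of `Sym(A)` consisting of the right translations `x ↦ x * g`. -/
def rightMuls (A : Type*) [Group A] : Subgroup (Equiv.Perm A) :=
  (MulAction.toPermHom Aᵐᵒᵖ A).range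

/-- The holomorph of `A`, i.e. the normalizer in `Sym(A)` of the group of right
translations. -/
def Hol (A : Type*) [Group A] : Subgroup (Equiv.Perm A) :=
  Subgroup.normalizer (rightMuls A : Set (Equiv.Perm A))

/-- `D(2,A)`: the subgroup of `Sym(A)` generated by `Hol(A)` and the inversion
permutation `g ↦ g⁻¹`. -/
def D2 (A : Type*) [Group A] : Subgroup (Equiv.Perm A) :=
  Hol A ⊔ Subgroup.closure {Equiv.inv A}

/-- The homomorphism `H × H →* Sym(A)` sending `(h₁, h₂)` to `x ↦ h₁ * x * h₂⁻¹`. -/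
def biTransHom {A : Type*} [Group A] (H : Subgroup A) : H × H →* Equiv.Perm A where
  toFun p := (Equiv.mulLeft (p.1 : A)).trans (Equiv.mulRight ((p.2 : A)⁻¹))
  map_one' := by ext x; simp
  map_mul' p q := by ext x; simp [mul_assoc]

/-- `H*`: the subgroup of `Sym(A)` of all permutations `x ↦ h₁ * x * h₂` with
`h₁, h₂ ∈ H`. -/
def starGroup {A : Type*} [Group A] (H : Subgroup A) : Subgroup (Equiv.Perm A) :=
  (biTransHom H).range

/-- The automorphism group of the Cayley graph `Cay(A, X)`: all permutations `f`
of `A` such that `h * g⁻¹ ∈ X ↔ f h * (f g)⁻¹ ∈ X` for all `g, h`. -/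
def cayAut {A : Type*} [Group A] (X : Set A) : Subgroup (Equiv.Perm A) where
  carrier := {f : Equiv.Perm A | ∀ g h : A, h * g⁻¹ ∈ X ↔ f h * (f g)⁻¹ ∈ X}
  one_mem' := by intro g h; simp
  mul_mem' := by
    intro a b ha hb g h
    simpa [Equiv.Perm.mul_apply] using (hb g h).trans (ha (b g) (b h))
  inv_mem' := by
    intro a ha g h
    simpa using (ha (a⁻¹ g) (a⁻¹ h)).symm

/-- A `K`-block: a subset `B` such that every `k ∈ K` either fixes `B` setwise or
moves it to a disjoint set. -/
def IsBlock {A : Type*} [Group A] (K : Subgroup (Equiv.Perm A)) (B : Set A) : Prop :=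
  ∀ k ∈ K, (k : Equiv.Perm A) '' B = B ∨ ((k : Equiv.Perm A) '' B) ∩ B = ∅

/-- The minimal block of `K`: the intersection of all `K`-blocks of size at least 2
containing the identity. -/
def minBlock {A : Type*} [Group A] (K : Subgroup (Equiv.Perm A)) : Set A :=
  ⋂₀ {B : Set A | IsBlock K B ∧ (1 : A) ∈ B ∧ 2 ≤ B.ncard}

/-- The right coset `L * g`. -/
def rcoset {A : Type*} [Group A] (L : Subgroup A) (g : A) : Set A :=
  {x : A | x * g⁻¹ ∈ L}

/-- `K_𝔏`: the subgroup of all elements of `K` mapping each right coset of `L` to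
itself. -/
def stabCosets {A : Type*} [Group A] (K : Subgroup (Equiv.Perm A)) (L : Subgroup A) :
    Subgroup (Equiv.Perm A) where
  carrier := {f : Equiv.Perm A | f ∈ K ∧ ∀ x : A, f x * x⁻¹ ∈ L}
  one_mem' := ⟨K.one_mem, fun x => by simpa using L.one_mem⟩
  mul_mem' := by
    rintro a b ⟨haK, ha⟩ ⟨hbK, hb⟩
    refine ⟨K.mul_mem haK hbK, fun x => ?_⟩
    have := L.mul_mem (ha (b x)) (hb x)
    simpa [Equiv.Perm.mul_apply, mul_assoc] using this
  inv_mem' := by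
    rintro a ⟨haK, ha⟩
    refine ⟨K.inv_mem haK, fun x => ?_⟩
    have := L.inv_mem (ha (a⁻¹ x))
    simpa [mul_inv_rev] using this

/-- Two subsets `X`, `X'` are equivalent (w.r.t. `K` and `L`) if every element of
`K_𝔏` fixes `X` pointwise iff it fixes `X'` pointwise. -/
def cosetEquiv {A : Type*} [Group A] (K : Subgroup (Equiv.Perm A)) (L : Subgroup A)
    (X X' : Set A) : Prop :=
  ∀ f ∈ stabCosets K L,
    ((∀ x ∈ X, (f : Equiv.Perm A) x = x) ↔ (∀ x ∈ X', (f : Equiv.Perm A) x = x))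

/-- The union `U` of the right cosets of `L` that are equivalent to `L`. -/
def Uset {A : Type*} [Group A] (K : Subgroup (Equiv.Perm A)) (L : Subgroup A) : Set A :=
  {x : A | cosetEquiv K L (L : Set A) (rcoset L x)}

/-- A permutation group `K` is 2-closed if it contains every permutation `f` such
that every pair of points can be moved as by `f` by some element of `K`. -/
def Is2Closed {A : Type*} [Group A] (K : Subgroup (Equiv.Perm A)) : Prop :=
  ∀ f : Equiv.Perm A, (∀ a b : A, ∃ k ∈ K, (k : Equiv.Perm A) a = f a ∧ k b = f b) → f ∈ K

/-! Since `G*` contains all maps `x ↦ a * x * b`, a block through `1` is closed under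
multiplication, inversion and conjugation, i.e. it is a normal subgroup. A nontrivial normal
subgroup `N` contains `S`: otherwise `N ∩ S = 1` by simplicity, so `N` centralizes `S`.
Hence the minimal block is an intersection of normal subgroups containing `S`. -/

section

variable {G : Type*} [Group G]

lemma mulLeft_trans_mulRight_mem_starGroup_top (a b : G) :
    (Equiv.mulLeft a).trans (Equiv.mulRight b) ∈ starGroup (⊤ : Subgroup G) :=
  ⟨(⟨a, trivial⟩, ⟨b⁻¹, trivial⟩), by ext x; simp [biTransHom]⟩

theorem Subgroup.le_of_normal_of_ne_bot {S N : Subgroup G} (hS : S.Normal)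
    (hSsimple : IsSimpleGroup S) (hScent : ∀ g : G, (∀ s ∈ S, g * s = s * g) → g = 1)
    (hN : N.Normal) (hN1 : N ≠ ⊥) : S ≤ N := by
  rcases hSsimple.eq_bot_or_eq_top_of_normal _ (hN.subgroupOf S) with h | h
  · refine absurd ((Subgroup.eq_bot_iff_forall N).2 fun g hg => hScent g fun s hs => ?_) hN1
    exact commute_of_normal_of_disjoint N S hN hS (subgroupOf_eq_bot.1 h) g s hg hs
  · exact subgroupOf_eq_top.1 h

namespace IsBlock

variable {K : Subgroup (Equiv.Perm G)} {B : Set G}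

lemma apply_mem (hB : IsBlock K B) {k : Equiv.Perm G} (hk : k ∈ K) {x y : G} (hx : x ∈ B)
    (hkx : k x ∈ B) (hy : y ∈ B) : k y ∈ B := by
  rcases hB k hk with h | h
  · exact h ▸ Set.mem_image_of_mem k hy
  · exact (Set.eq_empty_iff_forall_notMem.1 h (k x) ⟨Set.mem_image_of_mem k hx, hkx⟩).elim

variable (hGK : starGroup (⊤ : Subgroup G) ≤ K)
include hGK

lemma translate_mem (hB : IsBlock K B) (a b : G) {x y : G} (hx : x ∈ B) (hax : a * x * b ∈ B)
    (hy : y ∈ B) : a * y * b ∈ B := by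
  simpa using hB.apply_mem (hGK (mulLeft_trans_mulRight_mem_starGroup_top a b)) hx
    (by simpa using hax) hy

def toSubgroup (hB : IsBlock K B) (h1 : (1 : G) ∈ B) : Subgroup G where
  carrier := B
  one_mem' := h1
  mul_mem' {g h} hg hh := by simpa using hB.translate_mem hGK g 1 h1 (by simpa using hg) hh
  inv_mem' {g} hg := by simpa using hB.translate_mem hGK 1 g⁻¹ hg (by simpa using h1) h1

lemma toSubgroup_normal (hB : IsBlock K B) (h1 : (1 : G) ∈ B) :
    (hB.toSubgroup hGK h1).Normal :=
  ⟨fun n hn g => hB.translate_mem hGK g g⁻¹ h1 (by simpa using h1) hn⟩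

lemma toSubgroup_ne_bot (hB : IsBlock K B) (h1 : (1 : G) ∈ B) (h2 : 2 ≤ B.ncard) :
    hB.toSubgroup hGK h1 ≠ ⊥ := by
  intro h
  have hB1 : B = {1} := congrArg SetLike.coe h
  simp [hB1] at h2

end IsBlock

end

theorem minBlock_is_almost_simple_general (G : Type*) [Group G]
    (S : Subgroup G) (hSnormal : S.Normal) (hSsimple : IsSimpleGroup S)
    (hScent : ∀ g : G, (∀ s ∈ S, g * s = s * g) → g = 1)
    (K : Subgroup (Equiv.Perm G)) (hGK : starGroup (⊤ : Subgroup G) ≤ K) :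
    ∃ H : Subgroup G, (H : Set G) = minBlock K ∧ H.Normal ∧ S ≤ H ∧
      ∀ g ∈ H, (∀ s ∈ S, g * s = s * g) → g = 1 := by
  let H : Subgroup G := ⨅ (B : Set G) (hB : IsBlock K B ∧ (1 : G) ∈ B ∧ 2 ≤ B.ncard),
    hB.1.toSubgroup hGK hB.2.1
  have hH : (H : Set G) = minBlock K := by
    simp only [H, Subgroup.coe_iInf, minBlock, Set.sInter_eq_biInter, Set.mem_ofPred_eq]
    rfl
  refine ⟨H, hH, ?_, ?_, fun g _ => hScent g⟩
  · exact Subgroup.normal_iInf_normal fun B => Subgroup.normal_iInf_normal fun hB =>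
      hB.1.toSubgroup_normal hGK hB.2.1
  · exact le_iInf₂ fun B hB => Subgroup.le_of_normal_of_ne_bot hSnormal hSsimple hScent
      (hB.1.toSubgroup_normal hGK hB.2.1) (hB.1.toSubgroup_ne_bot hGK hB.2.1 hB.2.2)

/-- the minimal block of `K` is the underlying set of a normal subgroup
of `G` containing `S` in which the centralizer of `S` is trivial (hence an almost
simple group with socle `S`). -/
theorem minBlock_is_almost_simple (G : Type*) [Group G] [Fintype G]
    (S : Subgroup G) (hSnormal : S.Normal) (hSsimple : IsSimpleGroup S)
    (hSnonabelian : ¬ ∀ a b : S, a * b = b * a)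
    (hScent : ∀ g : G, (∀ s ∈ S, g * s = s * g) → g = 1)
    (K : Subgroup (Equiv.Perm G)) (hGK : starGroup (⊤ : Subgroup G) ≤ K) :
    ∃ H : Subgroup G, (H : Set G) = minBlock K ∧ H.Normal ∧ S ≤ H ∧
      ∀ g ∈ H, (∀ s ∈ S, g * s = s * g) → g = 1 :=
  minBlock_is_almost_simple_general G S hSnormal hSsimple hScent K hGK
end

section
/- Let G be a finite group with a normal subgroup S that is simple and nonabelian and whose centralizer in G is trivial (so G is almost simple with socle S). Then the centralizer in Sym(G) of the subgroup S* is trivial. -/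
/-
If `f` commutes with all maps `x ↦ s₁ x s₂` (`sᵢ ∈ S`), then for `s ∈ S` we get
`s f(x) = f(s x) = f(x · x⁻¹ s x) = f(x) · x⁻¹ s x`, using normality of `S` for the last step.
Hence `f(x) x⁻¹` centralizes `S`, so it is trivial and `f = 1`.
-/

@[simp]
theorem biTransHom_apply {A : Type*} [Group A] (H : Subgroup A) (p : H × H) (x : A) :
    biTransHom H p x = p.1 * x * (p.2 : A)⁻¹ :=
  rfl

section CentralizerStarGroup

variable {A : Type*} [Group A] {H : Subgroup A} {f : Equiv.Perm A}

theorem apply_mul_mul_inv_of_mem_centralizer_starGroup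
    (hf : f ∈ Subgroup.centralizer (starGroup H : Set (Equiv.Perm A)))
    {h₁ h₂ : A} (h₁H : h₁ ∈ H) (h₂H : h₂ ∈ H) (x : A) :
    f (h₁ * x * h₂⁻¹) = h₁ * f x * h₂⁻¹ := by
  have hcomm := Subgroup.mem_centralizer_iff.mp hf _ ⟨(⟨h₁, h₁H⟩, ⟨h₂, h₂H⟩), rfl⟩
  simpa using (congrArg (· x) hcomm).symm

theorem apply_mul_left_of_mem_centralizer_starGroup
    (hf : f ∈ Subgroup.centralizer (starGroup H : Set (Equiv.Perm A)))
    {h : A} (hH : h ∈ H) (x : A) : f (h * x) = h * f x := by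
  simpa using apply_mul_mul_inv_of_mem_centralizer_starGroup hf hH H.one_mem x

theorem apply_mul_right_of_mem_centralizer_starGroup
    (hf : f ∈ Subgroup.centralizer (starGroup H : Set (Equiv.Perm A)))
    {h : A} (hH : h ∈ H) (x : A) : f (x * h) = f x * h := by
  simpa using apply_mul_mul_inv_of_mem_centralizer_starGroup hf H.one_mem (H.inv_mem hH) x

theorem apply_mul_inv_mem_centralizer_of_mem_centralizer_starGroup [H.Normal]
    (hf : f ∈ Subgroup.centralizer (starGroup H : Set (Equiv.Perm A))) (x : A) :
    f x * x⁻¹ ∈ Subgroup.centralizer H := by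
  refine Subgroup.mem_centralizer_iff.mpr fun s hs => ?_
  have hconj : x⁻¹ * s * x ∈ H := by simpa using Subgroup.Normal.conj_mem ‹_› s hs x⁻¹
  have hswap : s * f x = f x * (x⁻¹ * s * x) := by
    calc s * f x = f (s * x) := (apply_mul_left_of_mem_centralizer_starGroup hf hs x).symm
      _ = f (x * (x⁻¹ * s * x)) := by group
      _ = f x * (x⁻¹ * s * x) := apply_mul_right_of_mem_centralizer_starGroup hf hconj x
  calc s * (f x * x⁻¹) = s * f x * x⁻¹ := (mul_assoc ..).symm
    _ = f x * x⁻¹ * s := by rw [hswap]; group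

end CentralizerStarGroup

theorem centralizer_socle_star_eq_bot_general (G : Type*) [Group G]
    (S : Subgroup G) (hSnormal : S.Normal)
    (hScent : ∀ g : G, (∀ s ∈ S, g * s = s * g) → g = 1)
    : Subgroup.centralizer (starGroup S : Set (Equiv.Perm G)) = ⊥ := by
  refine (Subgroup.eq_bot_iff_forall _).mpr fun f hf => Equiv.ext fun x => ?_
  have hcent := apply_mul_inv_mem_centralizer_of_mem_centralizer_starGroup hf x
  exact mul_inv_eq_one.mp <|
    hScent _ fun s hs => (Subgroup.mem_centralizer_iff.mp hcent s hs).symm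

/-- the centralizer in `Sym(G)` of `S*` is trivial. -/
theorem centralizer_socle_star_eq_bot (G : Type*) [Group G] [Fintype G]
    (S : Subgroup G) (hSnormal : S.Normal) (hSsimple : IsSimpleGroup S)
    (hSnonabelian : ¬ ∀ a b : S, a * b = b * a)
    (hScent : ∀ g : G, (∀ s ∈ S, g * s = s * g) → g = 1)
    : Subgroup.centralizer (starGroup S : Set (Equiv.Perm G)) = ⊥ :=
  centralizer_socle_star_eq_bot_general G S hSnormal hScent
end
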